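/- For a deterministic program M with uniform inputs, SE[U](M) ≤ ME[U](M), i.e., the Shannon-entropy based QIF is bounded above by the min-entropy based QIF (the logarithm of the number of distinct outputs). -/
import Mathlib


open Finset Real

variable {H O : Type*} [Fintype H] [Nonempty H] [DecidableEq O]

/-- The set of inputs mapped to output `o` (the preimage `M⁻¹(o)`). -/
def fiber (M : H → O) (o : O) : Finset H := Finset.univ.filter (fun h => M h = o)

/-- The set of outputs of `M` (the image/range of `M`). -/
def outputs (M : H → O) : Finset O := Finset.univ.image M

/-- Shannon-entropy based QIF under the uniform distribution (simplified formula). -/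
noncomputable def SE (M : H → O) : ℝ :=
  Real.logb 2 (Fintype.card H : ℝ) -
    ∑ o ∈ outputs M,
      ((fiber M o).card : ℝ) / (Fintype.card H : ℝ) * Real.logb 2 ((fiber M o).card : ℝ)

/-- Min-entropy based QIF under the uniform distribution. -/
noncomputable def ME (M : H → O) : ℝ := Real.logb 2 ((outputs M).card : ℝ)

omit [Nonempty H] in
lemma fiber_card_pos (M : H → O) {o : O} (ho : o ∈ outputs M) : 0 < (fiber M o).card := by
  obtain ⟨h, _, rfl⟩ := Finset.mem_image.mp ho
  exact Finset.card_pos.mpr ⟨h, by simp [fiber]⟩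

omit [Nonempty H] in
lemma sum_fiber_card (M : H → O) :
    ∑ o ∈ outputs M, (fiber M o).card = Fintype.card H :=
  (Finset.card_eq_sum_card_image M Finset.univ).symm

theorem SE_le_ME (M : H → O) : SE M ≤ ME M := by
  have hnpos : (0:ℝ) < (Fintype.card H : ℝ) := by
    exact_mod_cast Fintype.card_pos
  set n : ℝ := (Fintype.card H : ℝ) with hn
  set t := outputs M with ht
  set w : O → ℝ := fun o => ((fiber M o).card : ℝ) / n with hw
  set x : O → ℝ := fun o => n / ((fiber M o).card : ℝ) with hx
  have hfpos : ∀ o ∈ t, (0:ℝ) < ((fiber M o).card : ℝ) := fun o ho => by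
    exact_mod_cast fiber_card_pos M ho
  have hw0 : ∀ o ∈ t, 0 ≤ w o := fun o ho => by positivity
  have hw1 : ∑ o ∈ t, w o = 1 := by
    rw [hw, ← Finset.sum_div]
    rw [show ∑ o ∈ t, ((fiber M o).card : ℝ) = n by
      rw [hn]; exact_mod_cast sum_fiber_card M]
    field_simp
  have hxmem : ∀ o ∈ t, x o ∈ Set.Ioi (0:ℝ) := fun o ho => by
    have := hfpos o ho
    simp only [hx, Set.mem_Ioi]
    positivity
  have jensen := strictConcaveOn_log_Ioi.concaveOn.le_map_sum hw0 hw1 hxmem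
  have hsum : ∑ o ∈ t, w o • x o = (t.card : ℝ) := by
    rw [Finset.card_eq_sum_ones t]
    push_cast
    refine Finset.sum_congr rfl fun o ho => ?_
    have h1 := hfpos o ho
    simp only [hw, hx, smul_eq_mul]
    field_simp
  rw [hsum] at jensen
  have hSE : SE M = ∑ o ∈ t, w o * Real.logb 2 (x o) := by
    have hlogn : Real.logb 2 n = ∑ o ∈ t, w o * Real.logb 2 n := by
      rw [← Finset.sum_mul, hw1, one_mul]
    rw [SE, ← hn, ← ht, hlogn, ← Finset.sum_sub_distrib]
    refine Finset.sum_congr rfl fun o ho => ?_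
    have h1 := hfpos o ho
    rw [← mul_sub, hx]
    congr 1
    rw [Real.logb_div (ne_of_gt hnpos) (ne_of_gt h1)]
  rw [hSE, ME, ← ht]
  have hlog2 : (0:ℝ) < Real.log 2 := Real.log_pos one_lt_two
  simp only [Real.logb]
  calc ∑ o ∈ t, w o * (Real.log (x o) / Real.log 2)
      = (∑ o ∈ t, w o • Real.log (x o)) / Real.log 2 := by
        rw [Finset.sum_div]; exact Finset.sum_congr rfl fun o _ => by simp [smul_eq_mul]; ring
    _ ≤ Real.log (t.card : ℝ) / Real.log 2 := by gcongr
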